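/- Let F : C → B and G : D → B be Galois coverings of k-categories, and let (H,J) be a morphism from F to G. Then there is a unique group homomorphism Λ : Aut₁F → Aut₁G such that Λ(f) ∘ H = H ∘ f for every f ∈ Aut₁F; moreover Λ is surjective and its kernel is {f ∈ Aut₁F : H ∘ f = H}. -/

import Mathlib

open CategoryTheory

universe w v u

section CoveringDefs

variable (k : Type w) [CommRing k]

/-- A functor between `k`-linear categories is `k`-linear:
it is additive and commutes with the scalar action on morphisms. -/
def IsLinearFunctor {C : Type u} [Category.{v} C] [Preadditive C] [CategoryTheory.Linear k C]
    {B : Type u} [Category.{v} B] [Preadditive B] [CategoryTheory.Linear k B]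
    (F : C ⥤ B) : Prop :=
  (∀ (x y : C) (f g : x ⟶ y), F.map (f + g) = F.map f + F.map g) ∧
  (∀ (x y : C) (r : k) (f : x ⟶ y), F.map (r • f) = r • F.map f)

variable {C : Type u} [Category.{v} C] [Preadditive C] [CategoryTheory.Linear k C]
variable {B : Type u} [Category.{v} B] [Preadditive B] [CategoryTheory.Linear k B]

/-- The canonical map `⊕_{y ∈ F⁻¹(c)} C(x,y) →+ B(F(x),c)` induced by `F`
on the source star. -/
noncomputable def starOutHom (F : C ⥤ B) (hF : IsLinearFunctor k F) (x : C) (c : B) :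
    (DirectSum {y : C // F.obj y = c} (fun y => (x ⟶ y.1))) →+ (F.obj x ⟶ c) := by
  classical
  exact DirectSum.toAddMonoid fun y =>
    AddMonoidHom.mk' (fun f => F.map f ≫ eqToHom y.2)
      (fun f g => by (try simp only []); rw [hF.1 _ _ f g, Preadditive.add_comp])

/-- The canonical map `⊕_{y ∈ F⁻¹(c)} C(y,x) →+ B(c,F(x))` induced by `F`
on the target star. -/
noncomputable def starInHom (F : C ⥤ B) (hF : IsLinearFunctor k F) (x : C) (c : B) :
    (DirectSum {y : C // F.obj y = c} (fun y => (y.1 ⟶ x))) →+ (c ⟶ F.obj x) := by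
  classical
  exact DirectSum.toAddMonoid fun y =>
    AddMonoidHom.mk' (fun f => eqToHom y.2.symm ≫ F.map f)
      (fun f g => by (try simp only []); rw [hF.1 _ _ f g, Preadditive.comp_add])

/-- `F : C ⥤ B` is a covering of `k`-categories: it is a `k`-linear functor,
surjective on objects, inducing bijections on all source and target stars. -/
def IsCovering (F : C ⥤ B) : Prop :=
  ∃ hF : IsLinearFunctor k F,
    Function.Surjective F.obj ∧
    (∀ (x : C) (c : B), Function.Bijective (starOutHom k F hF x c)) ∧
    (∀ (x : C) (c : B), Function.Bijective (starInHom k F hF x c))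

end CoveringDefs

/-- A `k`-category is connected if the equivalence relation generated by
"there is a nonzero morphism from `x` to `y`" relates any two objects. -/
def IsConnectedKCat (C : Type u) [Category.{v} C] [Preadditive C] : Prop :=
  ∀ x y : C, Relation.EqvGen (fun a b : C => ∃ f : a ⟶ b, f ≠ 0) x y

section GaloisDefs

variable (k : Type w) [CommRing k]
variable {C : Type u} [Category.{v} C] [Preadditive C] [CategoryTheory.Linear k C]
variable {B : Type u} [Category.{v} B] [Preadditive B] [CategoryTheory.Linear k B]
variable {D : Type u} [Category.{v} D] [Preadditive D] [CategoryTheory.Linear k D]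

/-- `H` belongs to `Aut₁ F`: it is an invertible `k`-linear endofunctor with `F ∘ H = F`. -/
def MemAut1 (F : C ⥤ B) (H : C ⥤ C) : Prop :=
  IsLinearFunctor k H ∧
  (∃ Hinv : C ⥤ C, H ⋙ Hinv = 𝟭 C ∧ Hinv ⋙ H = 𝟭 C) ∧
  H ⋙ F = F

/-- A covering is Galois if its source is connected and `Aut₁ F` acts transitively
on some fibre. -/
def IsGaloisCovering (F : C ⥤ B) : Prop :=
  IsCovering k F ∧ IsConnectedKCat C ∧
  ∃ b₀ : B, ∀ x y : C, F.obj x = b₀ → F.obj y = b₀ →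
    ∃ H : C ⥤ C, MemAut1 k F H ∧ H.obj x = y

/-- A morphism `(H, J)` of coverings from `F : C ⥤ B` to `G : D ⥤ B`:
`H` and `J` are `k`-linear, `J` is an isomorphism which is the identity on objects,
and `G ∘ H = J ∘ F`. -/
def IsCoveringMorphism (F : C ⥤ B) (G : D ⥤ B) (H : C ⥤ D) (J : B ⥤ B) : Prop :=
  IsLinearFunctor k H ∧ IsLinearFunctor k J ∧
  (∃ Jinv : B ⥤ B, J ⋙ Jinv = 𝟭 B ∧ Jinv ⋙ J = 𝟭 B) ∧
  (∀ b : B, J.obj b = b) ∧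
  H ⋙ G = F ⋙ J

end GaloisDefs

/-- A universal covering: a Galois covering `U` such that for every Galois covering
`F : C ⥤ B` and every pair of objects `u₀`, `c₀` above the same object of `B`,
there is a unique `k`-linear functor `H` with `F ∘ H = U` and `H u₀ = c₀`. -/
def IsUniversalCovering (k : Type w) [CommRing k]
    {U' : Type u} [Category.{v} U'] [Preadditive U'] [CategoryTheory.Linear k U']
    {B : Type u} [Category.{v} B] [Preadditive B] [CategoryTheory.Linear k B]
    (U : U' ⥤ B) : Prop :=
  IsGaloisCovering k U ∧
  ∀ (C : Type u) [Category.{v} C] [Preadditive C] [CategoryTheory.Linear k C]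
    (F : C ⥤ B), IsGaloisCovering k F →
    ∀ (u₀ : U') (c₀ : C), U.obj u₀ = F.obj c₀ →
      ∃! H : U' ⥤ C, IsLinearFunctor k H ∧ H ⋙ F = U ∧ H.obj u₀ = c₀

/-- Given a functor `F : C ⥤ B`, a choice `x` of objects of `C` above each object of `B`,
and an endofunctor `H` of `C`, the subset `Z_H(c,b) = F(C(x_b, H x_c))` of `B(b,c)`. -/
def gradeSet {C : Type u} [Category.{v} C] {B : Type u} [Category.{v} B]
    (F : C ⥤ B) (x : B → C) (H : C ⥤ C) (b c : B) : Set (b ⟶ c) :=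
  {g | ∃ (h₁ : b = F.obj (x b)) (h₂ : F.obj (H.obj (x c)) = c)
        (f : x b ⟶ H.obj (x c)), g = eqToHom h₁ ≫ F.map f ≫ eqToHom h₂}

/-- The homogeneous component `Z_H(c,b)` as a `k`-submodule of `B(b,c)`. -/
noncomputable def gradeSubmodule (k : Type w) [CommRing k]
    {C : Type u} [Category.{v} C]
    {B : Type u} [Category.{v} B] [Preadditive B] [CategoryTheory.Linear k B]
    (F : C ⥤ B) (x : B → C) (H : C ⥤ C) (b c : B) : Submodule k (b ⟶ c) :=
  Submodule.span k (gradeSet F x H b c)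

/-!
Everything rests on rigidity: a covering is faithful with injective stars, so two lifts through
it of the same functor that agree at one object agree at both ends of every nonzero morphism,
hence everywhere on a connected category. Thus, for a fixed object `c₀` of `C`, `Λ f` is forced
to be the element of `Aut₁ G` sending `H c₀` to `H (f c₀)`; it exists because `Aut₁ G` is transitive on every fibre, and
multiplicativity, the kernel and uniqueness all follow from rigidity. For surjectivity, the image
of `H` is closed under nonzero morphisms (decompose `G v` in a star of `F`, push the pieces
forward by `H` and compare in the injective star of `G`), so `H` is surjective on objects; given
`g`, choose `c₁` with `H c₁ = g (H c₀)` and `f ∈ Aut₁ F` with `f c₀ = c₁`, and rigidity gives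
`Λ f = g`. Transitivity on all fibres is propagated the same way: moving a decomposition of
`F f`, for nonzero `f : x ⟶ w`, along automorphisms to the star of `x` shows that `w` lies in
the orbit of every object of its fibre.
-/

namespace DirectSum

variable {ι : Type*} [DecidableEq ι] {β : ι → Type*} [∀ i, AddCommMonoid (β i)]

theorem eq_of_of_eq_of {i j : ι} {x : β i} {y : β j} (h : of β i x = of β j y) (hx : x ≠ 0) :
    i = j := by
  rcases (DFinsupp.single_eq_single_iff i j x y).mp h with ⟨hij, -⟩ | ⟨hx0, -⟩
  · exact hij
  · exact absurd hx0 hx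

theorem exists_eq_of_sum_of_apply_ne_zero {α : Type*} {s : Finset α} {σ : α → ι}
    {x : ∀ a, β (σ a)} {i : ι} (h : (∑ a ∈ s, of β (σ a) (x a)) i ≠ 0) : ∃ a ∈ s, σ a = i := by
  rw [sum_apply] at h
  obtain ⟨a, ha, hne⟩ := Finset.exists_ne_zero_of_sum_ne_zero h
  exact ⟨a, ha, by_contra fun hai => hne (of_eq_of_ne _ _ _ (Ne.symm hai))⟩

end DirectSum

theorem IsConnectedKCat.induction {C : Type u} [Category.{v} C] [Preadditive C]
    (hC : IsConnectedKCat C) (p : C → Prop)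
    (h_out : ∀ ⦃a b : C⦄ (f : a ⟶ b), f ≠ 0 → p a → p b)
    (h_in : ∀ ⦃a b : C⦄ (f : a ⟶ b), f ≠ 0 → p b → p a) {x : C} (hx : p x) (y : C) : p y := by
  suffices ∀ {a b : C}, Relation.EqvGen (fun a b : C => ∃ f : a ⟶ b, f ≠ 0) a b → (p a ↔ p b) from
    (this (hC x y)).mp hx
  intro a b h
  induction h with
  | rel a b hab =>
    obtain ⟨f, hf⟩ := hab
    exact ⟨h_out f hf, h_in f hf⟩
  | refl => exact Iff.rfl
  | symm _ _ _ ih => exact ih.symm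
  | trans _ _ _ _ _ ih₁ ih₂ => exact ih₁.trans ih₂

section Linear

variable {k : Type w} [CommRing k]
variable {C : Type u} [Category.{v} C] [Preadditive C] [CategoryTheory.Linear k C]
variable {B : Type u} [Category.{v} B] [Preadditive B] [CategoryTheory.Linear k B]
variable {D : Type u} [Category.{v} D] [Preadditive D] [CategoryTheory.Linear k D]

theorem IsLinearFunctor.additive {F : C ⥤ B} (hF : IsLinearFunctor k F) : F.Additive :=
  ⟨hF.1 _ _ _ _⟩

theorem IsLinearFunctor.comp {F : C ⥤ B} {G : B ⥤ D} (hF : IsLinearFunctor k F)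
    (hG : IsLinearFunctor k G) : IsLinearFunctor k (F ⋙ G) :=
  ⟨fun _ _ f g => (congrArg G.map (hF.1 _ _ f g)).trans (hG.1 _ _ _ _),
    fun _ _ r f => (congrArg G.map (hF.2 _ _ r f)).trans (hG.2 _ _ _ _)⟩

theorem IsLinearFunctor.of_comp_eq_id {F : C ⥤ B} {G : B ⥤ C} (hF : IsLinearFunctor k F)
    [F.Faithful] (h : G ⋙ F = 𝟭 B) : IsLinearFunctor k G := by
  have hFG : ∀ {x y : B} (f : x ⟶ y), F.map (G.map f) = eqToHom _ ≫ f ≫ eqToHom _ :=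
    fun f => Functor.congr_hom h f
  refine ⟨fun x y f g => F.map_injective ?_, fun x y r f => F.map_injective ?_⟩
  · simp [hF.1, hFG, Preadditive.add_comp, Preadditive.comp_add]
  · simp [hF.2, hFG]

end Linear

section Aut1

variable {k : Type w} [CommRing k]
variable {C : Type u} [Category.{v} C] [Preadditive C] [CategoryTheory.Linear k C]
variable {B : Type u} [Category.{v} B]

theorem MemAut1.comp {F : C ⥤ B} {n₁ n₂ : C ⥤ C} (h₁ : MemAut1 k F n₁) (h₂ : MemAut1 k F n₂) :
    MemAut1 k F (n₁ ⋙ n₂) := by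
  obtain ⟨hl₁, ⟨m₁, hm₁, hm₁'⟩, hc₁⟩ := h₁
  obtain ⟨hl₂, ⟨m₂, hm₂, hm₂'⟩, hc₂⟩ := h₂
  refine ⟨hl₁.comp hl₂, ⟨m₂ ⋙ m₁, ?_, ?_⟩, ?_⟩
  · rw [Functor.assoc, ← Functor.assoc n₂, hm₂, Functor.id_comp, hm₁]
  · rw [Functor.assoc, ← Functor.assoc m₁, hm₁', Functor.id_comp, hm₂']
  · rw [Functor.assoc, hc₂, hc₁]

theorem MemAut1.inv {F : C ⥤ B} {n m : C ⥤ C} (h : MemAut1 k F n) (hnm : n ⋙ m = 𝟭 C)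
    (hmn : m ⋙ n = 𝟭 C) : MemAut1 k F m := by
  have : n.Faithful := Functor.Faithful.of_comp_eq hnm
  refine ⟨h.1.of_comp_eq_id hmn, ⟨n, hmn, hnm⟩, ?_⟩
  conv_lhs => rw [← h.2.2, ← Functor.assoc, hmn, Functor.id_comp]

variable (k) in
def Aut1Related (F : C ⥤ B) (x y : C) : Prop :=
  ∃ n : C ⥤ C, MemAut1 k F n ∧ n.obj x = y

variable (k) in
def Aut1TransitiveOn (F : C ⥤ B) (b : B) : Prop :=
  ∀ x y : C, F.obj x = b → F.obj y = b → Aut1Related k F x y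

theorem Aut1Related.symm {F : C ⥤ B} {x y : C} (h : Aut1Related k F x y) :
    Aut1Related k F y x := by
  obtain ⟨n, hn, rfl⟩ := h
  obtain ⟨m, hnm, hmn⟩ := hn.2.1
  exact ⟨m, hn.inv hnm hmn, Functor.congr_obj hnm x⟩

theorem Aut1Related.trans {F : C ⥤ B} {x y z : C} (h₁ : Aut1Related k F x y)
    (h₂ : Aut1Related k F y z) : Aut1Related k F x z := by
  obtain ⟨n₁, hn₁, rfl⟩ := h₁
  obtain ⟨n₂, hn₂, rfl⟩ := h₂
  exact ⟨n₁ ⋙ n₂, hn₁.comp hn₂, rfl⟩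

end Aut1

section Covering

open scoped Classical

variable {k : Type w} [CommRing k]
variable {C : Type u} [Category.{v} C] [Preadditive C] [CategoryTheory.Linear k C]
variable {B : Type u} [Category.{v} B] [Preadditive B] [CategoryTheory.Linear k B]

theorem starOutHom_of {F : C ⥤ B} (hF : IsLinearFunctor k F) {x : C} {c : B}
    (y : {y : C // F.obj y = c}) (f : x ⟶ y.1) :
    starOutHom k F hF x c (DirectSum.of (fun y : {y : C // F.obj y = c} => x ⟶ y.1) y f) =
      F.map f ≫ eqToHom y.2 := by
  unfold starOutHom
  rw [DirectSum.toAddMonoid_of]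
  rfl

theorem starInHom_of {F : C ⥤ B} (hF : IsLinearFunctor k F) {x : C} {c : B}
    (y : {y : C // F.obj y = c}) (f : y.1 ⟶ x) :
    starInHom k F hF x c (DirectSum.of (fun y : {y : C // F.obj y = c} => y.1 ⟶ x) y f) =
      eqToHom y.2.symm ≫ F.map f := by
  unfold starInHom
  rw [DirectSum.toAddMonoid_of]
  rfl

namespace IsCovering

variable {F : C ⥤ B}

theorem faithful (hF : IsCovering k F) : F.Faithful := by
  obtain ⟨hlin, -, hout, -⟩ := hF
  refine ⟨fun {x y} f g h => DirectSum.of_injective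
    (β := fun z : {z : C // F.obj z = F.obj y} => x ⟶ z.1) ⟨y, rfl⟩ ((hout x (F.obj y)).1 ?_)⟩
  rw [starOutHom_of, starOutHom_of]
  simpa using h

theorem map_ne_zero (hF : IsCovering k F) {x y : C} {f : x ⟶ y} (hf : f ≠ 0) : F.map f ≠ 0 := by
  have := hF.faithful
  have := hF.1.additive
  rwa [← F.map_zero, F.map_injective.ne_iff]

theorem target_eq_of_map_eq (hF : IsCovering k F) {x y₁ y₂ : C} {f₁ : x ⟶ y₁} {f₂ : x ⟶ y₂}
    (hy : F.obj y₁ = F.obj y₂) (h : F.map f₁ ≫ eqToHom hy = F.map f₂) (hf₁ : f₁ ≠ 0) :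
    y₁ = y₂ := by
  obtain ⟨hlin, -, hout, -⟩ := hF
  have := DirectSum.eq_of_of_eq_of ((hout x (F.obj y₂)).1 (a₁ := DirectSum.of
    (fun y : {y : C // F.obj y = F.obj y₂} => x ⟶ y.1) ⟨y₁, hy⟩ f₁)
    (a₂ := DirectSum.of _ ⟨y₂, rfl⟩ f₂) (by rw [starOutHom_of, starOutHom_of]; simpa using h)) hf₁
  exact congrArg Subtype.val this

theorem source_eq_of_map_eq (hF : IsCovering k F) {x₁ x₂ y : C} {f₁ : x₁ ⟶ y} {f₂ : x₂ ⟶ y}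
    (hx : F.obj x₁ = F.obj x₂) (h : F.map f₁ = eqToHom hx ≫ F.map f₂) (hf₁ : f₁ ≠ 0) :
    x₁ = x₂ := by
  obtain ⟨hlin, -, -, hin⟩ := hF
  have := DirectSum.eq_of_of_eq_of ((hin y (F.obj x₁)).1 (a₁ := DirectSum.of
    (fun x : {x : C // F.obj x = F.obj x₁} => x.1 ⟶ y) ⟨x₁, rfl⟩ f₁)
    (a₂ := DirectSum.of _ ⟨x₂, hx.symm⟩ f₂) (by rw [starInHom_of, starInHom_of]; simpa using h)) hf₁
  exact congrArg Subtype.val this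

theorem aut1Related_of_hom_from (hF : IsCovering k F) {x y w : C}
    (hx : Aut1TransitiveOn k F (F.obj x)) (hyw : F.obj y = F.obj w) {f : x ⟶ w} (hf : f ≠ 0) :
    Aut1Related k F y w := by
  obtain ⟨hlin, -, hout, hin⟩ := hF
  obtain ⟨η, hη⟩ := (hin y (F.obj x)).2 (F.map f ≫ eqToHom hyw.symm)
  choose n hn hnx using fun z : {z : C // F.obj z = F.obj x} => hx z x z.2 rfl
  have hnF : ∀ z {a b : C} (g : a ⟶ b), F.map ((n z).map g) = eqToHom _ ≫ F.map g ≫ eqToHom _ :=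
    fun z _ _ g => Functor.congr_hom (hn z).2.2 g
  have hfib : ∀ z, F.obj ((n z).obj y) = F.obj w := fun z =>
    (Functor.congr_obj (hn z).2.2 y).trans hyw
  have hζ : ∑ z ∈ η.support, DirectSum.of (fun v : {v : C // F.obj v = F.obj w} => x ⟶ v.1)
      ⟨(n z).obj y, hfib z⟩ (eqToHom (hnx z).symm ≫ (n z).map (η z)) =
      DirectSum.of _ ⟨w, rfl⟩ f := by
    apply (hout x (F.obj w)).1
    have hfη : F.map f = starInHom k F hlin y (F.obj x) η ≫ eqToHom hyw := by simp [hη]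
    rw [starOutHom_of, map_sum, eqToHom_refl, Category.comp_id, hfη]
    conv_rhs => rw [← DirectSum.sum_support_of η]
    rw [map_sum, Preadditive.sum_comp]
    refine Finset.sum_congr rfl fun z _ => ?_
    rw [starOutHom_of, starInHom_of]
    simp [hnF, eqToHom_map]
  obtain ⟨z, -, hz⟩ := DirectSum.exists_eq_of_sum_of_apply_ne_zero
    (i := (⟨w, rfl⟩ : {v : C // F.obj v = F.obj w})) (by rwa [hζ, DirectSum.of_eq_same])
  exact ⟨n z, hn z, congrArg Subtype.val hz⟩

theorem aut1Related_of_hom_to (hF : IsCovering k F) {x y w : C}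
    (hx : Aut1TransitiveOn k F (F.obj x)) (hyw : F.obj y = F.obj w) {f : w ⟶ x} (hf : f ≠ 0) :
    Aut1Related k F y w := by
  obtain ⟨hlin, -, hout, hin⟩ := hF
  obtain ⟨η, hη⟩ := (hout y (F.obj x)).2 (eqToHom hyw ≫ F.map f)
  choose n hn hnx using fun z : {z : C // F.obj z = F.obj x} => hx z x z.2 rfl
  have hnF : ∀ z {a b : C} (g : a ⟶ b), F.map ((n z).map g) = eqToHom _ ≫ F.map g ≫ eqToHom _ :=
    fun z _ _ g => Functor.congr_hom (hn z).2.2 g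
  have hfib : ∀ z, F.obj ((n z).obj y) = F.obj w := fun z =>
    (Functor.congr_obj (hn z).2.2 y).trans hyw
  have hζ : ∑ z ∈ η.support, DirectSum.of (fun v : {v : C // F.obj v = F.obj w} => v.1 ⟶ x)
      ⟨(n z).obj y, hfib z⟩ ((n z).map (η z) ≫ eqToHom (hnx z)) =
      DirectSum.of _ ⟨w, rfl⟩ f := by
    apply (hin x (F.obj w)).1
    have hfη : F.map f = eqToHom hyw.symm ≫ starOutHom k F hlin y (F.obj x) η := by simp [hη]
    rw [starInHom_of, map_sum, eqToHom_refl, Category.id_comp, hfη]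
    conv_rhs => rw [← DirectSum.sum_support_of η]
    rw [map_sum, Preadditive.comp_sum]
    refine Finset.sum_congr rfl fun z _ => ?_
    rw [starOutHom_of, starInHom_of]
    simp [hnF, eqToHom_map]
  obtain ⟨z, -, hz⟩ := DirectSum.exists_eq_of_sum_of_apply_ne_zero
    (i := (⟨w, rfl⟩ : {v : C // F.obj v = F.obj w})) (by rwa [hζ, DirectSum.of_eq_same])
  exact ⟨n z, hn z, congrArg Subtype.val hz⟩

theorem aut1TransitiveOn_of_hom_from (hF : IsCovering k F) {x w : C}
    (hx : Aut1TransitiveOn k F (F.obj x)) {f : x ⟶ w} (hf : f ≠ 0) :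
    Aut1TransitiveOn k F (F.obj w) := fun _ _ h₁ h₂ =>
  (hF.aut1Related_of_hom_from hx h₁ hf).trans (hF.aut1Related_of_hom_from hx h₂ hf).symm

theorem aut1TransitiveOn_of_hom_to (hF : IsCovering k F) {x w : C}
    (hx : Aut1TransitiveOn k F (F.obj x)) {f : w ⟶ x} (hf : f ≠ 0) :
    Aut1TransitiveOn k F (F.obj w) := fun _ _ h₁ h₂ =>
  (hF.aut1Related_of_hom_to hx h₁ hf).trans (hF.aut1Related_of_hom_to hx h₂ hf).symm

end IsCovering

theorem IsGaloisCovering.aut1Related_of_obj_eq {F : C ⥤ B} (hF : IsGaloisCovering k F)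
    {x y : C} (h : F.obj x = F.obj y) : Aut1Related k F x y := by
  obtain ⟨hcov, hC, b₀, hb₀⟩ := hF
  obtain ⟨x₀, rfl⟩ := hcov.2.1 b₀
  have : ∀ c, Aut1TransitiveOn k F (F.obj c) :=
    hC.induction (fun c => Aut1TransitiveOn k F (F.obj c))
      (fun _ _ _ hf ha => hcov.aut1TransitiveOn_of_hom_from ha hf)
      (fun _ _ _ hf hb => hcov.aut1TransitiveOn_of_hom_to hb hf) hb₀
  exact this y x y h rfl

theorem IsGaloisCovering.nonempty {F : C ⥤ B} (hF : IsGaloisCovering k F) : Nonempty C :=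
  let ⟨⟨_, hsurj, _⟩, _, b₀, _⟩ := hF
  ⟨(hsurj b₀).choose⟩

end Covering

section Rigidity

variable {k : Type w} [CommRing k]
variable {C : Type u} [Category.{v} C] [Preadditive C]
variable {B : Type u} [Category.{v} B] [Preadditive B] [CategoryTheory.Linear k B]
variable {D : Type u} [Category.{v} D] [Preadditive D] [CategoryTheory.Linear k D]

theorem IsCovering.functor_eq_of_comp_eq {G : D ⥤ B} (hG : IsCovering k G)
    (hC : IsConnectedKCat C) {P Q : C ⥤ D} (hPQ : P ⋙ G = Q ⋙ G)
    (hP : ∀ ⦃a b : C⦄ (f : a ⟶ b), f ≠ 0 → (P ⋙ G).map f ≠ 0) {c₀ : C}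
    (h₀ : P.obj c₀ = Q.obj c₀) : P = Q := by
  have := hG.faithful
  have := hG.1.additive
  have hmap : ∀ {a b : C} (f : a ⟶ b), G.map (P.map f) = eqToHom _ ≫ G.map (Q.map f) ≫ eqToHom _ :=
    fun f => Functor.congr_hom hPQ f
  have hP' : ∀ {a b : C} {f : a ⟶ b}, f ≠ 0 → P.map f ≠ 0 := fun hf h0 =>
    hP _ hf (by rw [Functor.comp_map, h0, G.map_zero])
  have hobj : ∀ c, P.obj c = Q.obj c := by
    refine hC.induction _ (fun a b f hf hab => ?_) (fun a b f hf hab => ?_) h₀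
    · exact hG.target_eq_of_map_eq (f₂ := eqToHom hab ≫ Q.map f) (Functor.congr_obj hPQ b)
        (by simp [hmap, eqToHom_map]) (hP' hf)
    · exact hG.source_eq_of_map_eq (f₂ := Q.map f ≫ eqToHom hab.symm) (Functor.congr_obj hPQ a)
        (by simp [hmap, eqToHom_map]) (hP' hf)
  exact CategoryTheory.Functor.ext hobj fun a b f => G.map_injective (by simp [hmap, eqToHom_map])

theorem IsCovering.eq_of_comp_eq_self {G : D ⥤ B} (hG : IsCovering k G) (hD : IsConnectedKCat D)
    {g₁ g₂ : D ⥤ D} (h₁ : g₁ ⋙ G = G) (h₂ : g₂ ⋙ G = G) {d : D} (hd : g₁.obj d = g₂.obj d) :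
    g₁ = g₂ :=
  hG.functor_eq_of_comp_eq hD (h₁.trans h₂.symm)
    (fun _ _ _ hf => by rw [h₁]; exact hG.map_ne_zero hf) hd

end Rigidity

section Morphism

open scoped Classical

variable {k : Type w} [CommRing k]
variable {C : Type u} [Category.{v} C] [Preadditive C] [CategoryTheory.Linear k C]
variable {B : Type u} [Category.{v} B] [Preadditive B] [CategoryTheory.Linear k B]
variable {D : Type u} [Category.{v} D] [Preadditive D] [CategoryTheory.Linear k D]

namespace IsCoveringMorphism

variable {F : C ⥤ B} {G : D ⥤ B} {H : C ⥤ D} {J : B ⥤ B}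

theorem isIso_base (hHJ : IsCoveringMorphism k F G H J) : J.IsIso :=
  let ⟨_, _, ⟨Jinv, hJ₁, hJ₂⟩, _⟩ := hHJ
  (IsoCat.mk J Jinv hJ₁.symm hJ₂).isIso_functor

theorem obj_obj (hHJ : IsCoveringMorphism k F G H J) (c : C) : G.obj (H.obj c) = F.obj c :=
  (Functor.congr_obj hHJ.2.2.2.2 c).trans (hHJ.2.2.2.1 _)

theorem exists_obj_eq_of_hom_from (hHJ : IsCoveringMorphism k F G H J) (hF : IsCovering k F)
    (hG : IsCovering k G) {c : C} {d : D} {v : H.obj c ⟶ d} (hv : v ≠ 0) :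
    ∃ c', H.obj c' = d := by
  have := hHJ.isIso_base
  have hfib : ∀ y : {y : C // F.obj y = G.obj d}, G.obj (H.obj y.1) = G.obj d := fun y =>
    (hHJ.obj_obj y.1).trans y.2
  obtain ⟨-, hJ, -, hJobj, hcomm⟩ := hHJ
  have := hJ.additive
  obtain ⟨hFlin, -, hFout, -⟩ := hF
  obtain ⟨hGlin, -, hGout, -⟩ := hG
  have hmap : ∀ {a b : C} (f : a ⟶ b), G.map (H.map f) = eqToHom _ ≫ J.map (F.map f) ≫ eqToHom _ :=
    fun f => Functor.congr_hom hcomm f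
  obtain ⟨ξ, hξ⟩ := (hFout c (G.obj d)).2 (J.preimage
    (eqToHom (Functor.congr_obj hcomm c).symm ≫ G.map v ≫ eqToHom (hJobj _).symm))
  have hζ : ∑ y ∈ ξ.support, DirectSum.of (fun e : {e : D // G.obj e = G.obj d} => H.obj c ⟶ e.1)
      ⟨H.obj y, hfib y⟩ (H.map (ξ y)) = DirectSum.of _ ⟨d, rfl⟩ v := by
    apply (hGout (H.obj c) (G.obj d)).1
    have hvξ : G.map v = eqToHom (Functor.congr_obj hcomm c) ≫
        J.map (starOutHom k F hFlin c (G.obj d) ξ) ≫ eqToHom (hJobj _) := by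
      simp [hξ]
    rw [starOutHom_of, map_sum, eqToHom_refl, Category.comp_id, hvξ]
    conv_rhs => rw [← DirectSum.sum_support_of ξ]
    rw [map_sum, J.map_sum, Preadditive.sum_comp, Preadditive.comp_sum]
    refine Finset.sum_congr rfl fun y _ => ?_
    rw [starOutHom_of, starOutHom_of]
    simp [hmap, eqToHom_map]
  obtain ⟨y, -, hy⟩ := DirectSum.exists_eq_of_sum_of_apply_ne_zero
    (i := (⟨d, rfl⟩ : {e : D // G.obj e = G.obj d})) (by rwa [hζ, DirectSum.of_eq_same])
  exact ⟨y, congrArg Subtype.val hy⟩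

theorem exists_obj_eq_of_hom_to (hHJ : IsCoveringMorphism k F G H J) (hF : IsCovering k F)
    (hG : IsCovering k G) {c : C} {d : D} {v : d ⟶ H.obj c} (hv : v ≠ 0) :
    ∃ c', H.obj c' = d := by
  have := hHJ.isIso_base
  have hfib : ∀ y : {y : C // F.obj y = G.obj d}, G.obj (H.obj y.1) = G.obj d := fun y =>
    (hHJ.obj_obj y.1).trans y.2
  obtain ⟨-, hJ, -, hJobj, hcomm⟩ := hHJ
  have := hJ.additive
  obtain ⟨hFlin, -, -, hFin⟩ := hF
  obtain ⟨hGlin, -, -, hGin⟩ := hG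
  have hmap : ∀ {a b : C} (f : a ⟶ b), G.map (H.map f) = eqToHom _ ≫ J.map (F.map f) ≫ eqToHom _ :=
    fun f => Functor.congr_hom hcomm f
  obtain ⟨ξ, hξ⟩ := (hFin c (G.obj d)).2 (J.preimage
    (eqToHom (hJobj _) ≫ G.map v ≫ eqToHom (Functor.congr_obj hcomm c)))
  have hζ : ∑ y ∈ ξ.support, DirectSum.of (fun e : {e : D // G.obj e = G.obj d} => e.1 ⟶ H.obj c)
      ⟨H.obj y, hfib y⟩ (H.map (ξ y)) = DirectSum.of _ ⟨d, rfl⟩ v := by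
    apply (hGin (H.obj c) (G.obj d)).1
    have hvξ : G.map v = eqToHom (hJobj _).symm ≫
        J.map (starInHom k F hFlin c (G.obj d) ξ) ≫ eqToHom (Functor.congr_obj hcomm c).symm := by
      simp [hξ]
    rw [starInHom_of, map_sum, eqToHom_refl, Category.id_comp, hvξ]
    conv_rhs => rw [← DirectSum.sum_support_of ξ]
    rw [map_sum, J.map_sum, Preadditive.sum_comp, Preadditive.comp_sum]
    refine Finset.sum_congr rfl fun y _ => ?_
    rw [starInHom_of, starInHom_of]
    simp [hmap, eqToHom_map]
  obtain ⟨y, -, hy⟩ := DirectSum.exists_eq_of_sum_of_apply_ne_zero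
    (i := (⟨d, rfl⟩ : {e : D // G.obj e = G.obj d})) (by rwa [hζ, DirectSum.of_eq_same])
  exact ⟨y, congrArg Subtype.val hy⟩

theorem obj_surjective (hHJ : IsCoveringMorphism k F G H J) (hF : IsCovering k F)
    (hG : IsCovering k G) (hD : IsConnectedKCat D) [Nonempty C] : Function.Surjective H.obj :=
  hD.induction (fun d => ∃ c, H.obj c = d)
    (fun _ _ _ hv ⟨_, hc⟩ => by subst hc; exact hHJ.exists_obj_eq_of_hom_from hF hG hv)
    (fun _ _ _ hv ⟨_, hc⟩ => by subst hc; exact hHJ.exists_obj_eq_of_hom_to hF hG hv)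
    (⟨Classical.arbitrary C, rfl⟩ : ∃ c, H.obj c = H.obj (Classical.arbitrary C))

theorem comp_eq_of_obj_eq (hHJ : IsCoveringMorphism k F G H J) (hF : IsCovering k F)
    (hG : IsCovering k G) (hC : IsConnectedKCat C) {f : C ⥤ C} (hf : f ⋙ F = F) {g : D ⥤ D}
    (hg : g ⋙ G = G) {c : C} (h : g.obj (H.obj c) = H.obj (f.obj c)) : H ⋙ g = f ⋙ H := by
  have := hHJ.isIso_base
  have := hHJ.2.1.additive
  have hFJ : (H ⋙ g) ⋙ G = F ⋙ J := by rw [Functor.assoc, hg, hHJ.2.2.2.2]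
  refine hG.functor_eq_of_comp_eq hC (hFJ.trans ?_) (fun _ _ _ hφ => ?_) h
  · rw [Functor.assoc, hHJ.2.2.2.2, ← Functor.assoc, hf]
  · rw [hFJ, Functor.comp_map, ← J.map_zero, J.map_injective.ne_iff]
    exact hF.map_ne_zero hφ

theorem exists_memAut1_target_comp_eq (hHJ : IsCoveringMorphism k F G H J) (hF : IsCovering k F)
    (hC : IsConnectedKCat C) [Nonempty C] (hG : IsGaloisCovering k G) {f : C ⥤ C}
    (hf : MemAut1 k F f) : ∃ g : D ⥤ D, MemAut1 k G g ∧ H ⋙ g = f ⋙ H := by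
  let c := Classical.arbitrary C
  obtain ⟨g, hg, hgc⟩ := hG.aut1Related_of_obj_eq (x := H.obj c) (y := H.obj (f.obj c))
    (by rw [hHJ.obj_obj, hHJ.obj_obj, ← Functor.comp_obj, hf.2.2])
  exact ⟨g, hg, hHJ.comp_eq_of_obj_eq hF hG.1 hC hf.2.2 hg.2.2 hgc⟩

theorem exists_memAut1_source_comp_eq (hHJ : IsCoveringMorphism k F G H J)
    (hF : IsGaloisCovering k F) (hG : IsCovering k G) (hD : IsConnectedKCat D) {g : D ⥤ D}
    (hg : MemAut1 k G g) : ∃ f : C ⥤ C, MemAut1 k F f ∧ H ⋙ g = f ⋙ H := by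
  have := hF.nonempty
  let c := Classical.arbitrary C
  obtain ⟨c', hc'⟩ := hHJ.obj_surjective hF.1 hG hD (g.obj (H.obj c))
  obtain ⟨f, hf, rfl⟩ := hF.aut1Related_of_obj_eq (x := c) (y := c')
    (by rw [← hHJ.obj_obj, ← hHJ.obj_obj, hc']; exact (Functor.congr_obj hg.2.2 _).symm)
  exact ⟨f, hf, hHJ.comp_eq_of_obj_eq hF.1 hG hF.2.1 hf.2.2 hg.2.2 hc'.symm⟩

end IsCoveringMorphism

end Morphism

theorem galois_morphism_induces_group_surjection (k : Type w) [CommRing k]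
    {C : Type u} [Category.{v} C] [Preadditive C] [CategoryTheory.Linear k C]
    {B : Type u} [Category.{v} B] [Preadditive B] [CategoryTheory.Linear k B]
    {D : Type u} [Category.{v} D] [Preadditive D] [CategoryTheory.Linear k D]
    (F : C ⥤ B) (G : D ⥤ B) (hF : IsGaloisCovering k F) (hG : IsGaloisCovering k G)
    (H : C ⥤ D) (J : B ⥤ B) (hHJ : IsCoveringMorphism k F G H J) :
    ∃ Λ : (C ⥤ C) → (D ⥤ D),
      (∀ f : C ⥤ C, MemAut1 k F f → MemAut1 k G (Λ f) ∧ H ⋙ Λ f = f ⋙ H) ∧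
      (∀ f₁ f₂ : C ⥤ C, MemAut1 k F f₁ → MemAut1 k F f₂ →
        Λ (f₁ ⋙ f₂) = Λ f₁ ⋙ Λ f₂) ∧
      (∀ g : D ⥤ D, MemAut1 k G g → ∃ f : C ⥤ C, MemAut1 k F f ∧ Λ f = g) ∧
      (∀ f : C ⥤ C, MemAut1 k F f → (Λ f = 𝟭 D ↔ f ⋙ H = H)) ∧
      (∀ Λ' : (C ⥤ C) → (D ⥤ D),
        (∀ f : C ⥤ C, MemAut1 k F f → MemAut1 k G (Λ' f) ∧ H ⋙ Λ' f = f ⋙ H) →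
        ∀ f : C ⥤ C, MemAut1 k F f → Λ' f = Λ f) := by
  have := hF.nonempty
  choose! Λ hΛ using fun f (hf : MemAut1 k F f) =>
    hHJ.exists_memAut1_target_comp_eq hF.1 hF.2.1 hG hf
  have eq_Λ : ∀ {f : C ⥤ C} {g : D ⥤ D}, MemAut1 k F f → g ⋙ G = G → H ⋙ g = f ⋙ H →
      g = Λ f := fun hf hg h => hG.1.eq_of_comp_eq_self hG.2.1 hg (hΛ _ hf).1.2.2
    (Functor.congr_obj (h.trans (hΛ _ hf).2.symm) (Classical.arbitrary C))
  refine ⟨Λ, hΛ, fun f₁ f₂ h₁ h₂ => (eq_Λ (h₁.comp h₂) ?_ ?_).symm, fun g hg => ?_,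
    fun f hf => ⟨fun h => ?_, fun h => ?_⟩,
    fun Λ' hΛ' f hf => eq_Λ hf (hΛ' f hf).1.2.2 (hΛ' f hf).2⟩
  · rw [Functor.assoc, (hΛ f₂ h₂).1.2.2, (hΛ f₁ h₁).1.2.2]
  · rw [← Functor.assoc, (hΛ f₁ h₁).2, Functor.assoc, (hΛ f₂ h₂).2, Functor.assoc]
  · obtain ⟨f, hf, hfg⟩ := hHJ.exists_memAut1_source_comp_eq hF hG.1 hG.2.1 hg
    exact ⟨f, hf, (eq_Λ hf hg.2.2 hfg).symm⟩
  · rw [← (hΛ f hf).2, h, Functor.comp_id]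
  · exact (eq_Λ hf (Functor.id_comp G) ((Functor.comp_id H).trans h.symm)).symm
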